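/- arXiv:1507.05648 — 3 statements merged into one kernel-verified Lean document; each statement's English description precedes it below -/
import Mathlib

section
/- Let V : [0,∞) → ℝ≥0 be absolutely continuous satisfying V'(t) ≤ -μ V(t) + q·sup_{s∈[max(t-Δ,0),t]} V(s) for almost every t, with μ > q > 0 and Δ > 0. Then there exists λ > 0 (any λ > 0 satisfying λ ≤ μ - q·e^{λΔ}) such that V(t) ≤ (sup_{s∈[0,Δ]} V(s))·e^{-λ(t-Δ)} for all t ≥ Δ. -/
open Set MeasureTheory intervalIntegral Real

/-!
Fix `c > sup_{[0,Δ]} V` and compare `V` with `Φ t = c e^{-λ(t-Δ)}`. If `V` ever exceeds `Φ`,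
let `t₀ > Δ` be the first time it reaches `Φ`. Up to `t₀` the delayed supremum is at most
`e^{λΔ} Φ`, so `λ ≤ μ - q e^{λΔ}` turns the Halanay inequality into `(Φ - V)' ≥ -μ (Φ - V)`
a.e. on `[Δ, t₀]`. As `V` is absolutely continuous, `e^{μt} (Φ - V)` is then nondecreasing on
`[Δ, t₀]`, which is absurd: it is positive at `Δ` and nonpositive at `t₀`. Letting `c` decrease
to the supremum gives the bound.
-/

theorem AbsolutelyContinuousOnInterval.congr {f g : ℝ → ℝ} {a b : ℝ}
    (hf : AbsolutelyContinuousOnInterval f a b) (hfg : EqOn f g (uIcc a b)) :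
    AbsolutelyContinuousOnInterval g a b := by
  refine Filter.Tendsto.congr' ?_ hf
  filter_upwards [Filter.mem_inf_of_right (Filter.mem_principal_self _)] with E hE
  exact Finset.sum_congr rfl fun i hi => by rw [hfg (hE.1 i hi).1, hfg (hE.1 i hi).2]

theorem absolutelyContinuousOnInterval_of_sub_eq_integral {f f' : ℝ → ℝ} {a b : ℝ}
    (hf' : IntervalIntegrable f' volume a b)
    (hf : ∀ x ∈ uIcc a b, f x - f a = ∫ s in a..x, f' s) :
    AbsolutelyContinuousOnInterval f a b := by
  refine ((contDiffOn_const (c := f a)).absolutelyContinuousOnInterval.add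
    (hf'.absolutelyContinuousOnInterval_intervalIntegral left_mem_uIcc)).congr fun x hx => ?_
  simp [← hf x hx]

theorem AbsolutelyContinuousOnInterval.le_mul_exp_of_ae_deriv {W W' : ℝ → ℝ} {a b μ : ℝ}
    (hW : AbsolutelyContinuousOnInterval W a b) (hab : a ≤ b)
    (hderiv : ∀ᵐ x ∂volume.restrict (Ioo a b), HasDerivAt W (W' x) x)
    (hle : ∀ᵐ x ∂volume.restrict (Ioo a b), -μ * W x ≤ W' x) :
    W a ≤ W b * exp (μ * (b - a)) := by
  have hG : AbsolutelyContinuousOnInterval (fun x => W x * exp (μ * x)) a b :=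
    hW.fun_mul
      (by fun_prop : ContDiff ℝ 1 fun x => exp (μ * x)).contDiffOn.absolutelyContinuousOnInterval
  have hmono : W a * exp (μ * a) ≤ W b * exp (μ * b) := by
    rw [← sub_nonneg, ← hG.integral_deriv_eq_sub]
    refine integral_nonneg_of_ae_restrict hab ((ae_restrict_congr_set Ioo_ae_eq_Icc).1 ?_)
    filter_upwards [hderiv, hle] with x hWx hlex
    have hGx : HasDerivAt (fun y => W y * exp (μ * y))
        (W' x * exp (μ * x) + W x * (exp (μ * x) * (μ * 1))) x :=
      hWx.mul ((hasDerivAt_id x).const_mul μ).exp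
    rw [hGx.deriv, Pi.zero_apply, mul_one]
    nlinarith [exp_pos (μ * x)]
  calc W a = W a * exp (μ * a) * exp (-(μ * a)) := by rw [mul_assoc, ← exp_add]; simp
    _ ≤ W b * exp (μ * b) * exp (-(μ * a)) := by gcongr
    _ = W b * exp (μ * (b - a)) := by rw [mul_assoc, ← exp_add]; ring_nf

theorem integrable_iff_lintegral_ofReal_sub_lt_top {α : Type*} [MeasurableSpace α]
    {μ : Measure α} [IsFiniteMeasure μ] {f : α → ℝ} {K : ℝ}
    (hf : AEStronglyMeasurable f μ) (hK : ∀ᵐ x ∂μ, f x ≤ K) :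
    Integrable f μ ↔ ∫⁻ x, ENNReal.ofReal (K - f x) ∂μ < ⊤ := by
  have hKf : Integrable (fun x => K - f x) μ ↔ Integrable f μ :=
    ⟨fun h => ((integrable_const K).sub h).congr (.of_forall fun x => by simp),
      fun h => (integrable_const K).sub h⟩
  have hnonneg : 0 ≤ᵐ[μ] fun x => K - f x := hK.mono fun x hx => sub_nonneg.2 hx
  rw [← hKf]
  exact ⟨fun h => (hasFiniteIntegral_iff_ofReal hnonneg).1 h.2,
    fun h => ⟨aestronglyMeasurable_const.sub hf, (hasFiniteIntegral_iff_ofReal hnonneg).2 h⟩⟩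

theorem setLIntegral_ofReal_const_sub {f : ℝ → ℝ} {a b K : ℝ} (hab : a ≤ b)
    (hf : IntegrableOn f (Ioc a b)) (hK : ∀ᵐ x ∂volume.restrict (Ioc a b), f x ≤ K) :
    ∫⁻ x in Ioc a b, ENNReal.ofReal (K - f x) =
      ENNReal.ofReal (K * (b - a) - ∫ x in a..b, f x) := by
  have hKint : IntegrableOn (fun _ => K) (Ioc a b) := integrableOn_const measure_Ioc_lt_top.ne
  have hKf : IntegrableOn (fun x => K - f x) (Ioc a b) := hKint.sub hf
  rw [← ofReal_integral_eq_lintegral_ofReal hKf (hK.mono fun x hx => sub_nonneg.2 hx),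
    integral_sub hKint hf, setIntegral_const, integral_of_le hab, Real.volume_real_Ioc,
    max_eq_left (sub_nonneg.2 hab), smul_eq_mul, mul_comm]

theorem ae_restrict_eq_zero_of_hasDerivAt_of_eqOn_const {f f' : ℝ → ℝ} {U : Set ℝ} {C : ℝ}
    (hU : IsOpen U) (hf : EqOn f (fun _ => C) U)
    (hderiv : ∀ᵐ x ∂volume.restrict U, HasDerivAt f (f' x) x) :
    f' =ᵐ[volume.restrict U] 0 := by
  filter_upwards [hderiv, ae_restrict_mem hU.measurableSet] with x hx hxU
  exact hx.unique ((hasDerivAt_const x C).congr_of_eventuallyEq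
    (Filter.eventuallyEq_of_mem (hU.mem_nhds hxU) hf))

/-- `hFTC` alone does not give integrability, since `∫ s in a..x, f' s = 0` for non-integrable
`f'`. Past the supremum `τ` of the times up to which `f'` is integrable, this junk value makes `f`
constant, so `f' = 0` a.e. there and integrability extends beyond `τ`. -/
theorem integrableOn_Ioc_of_sub_eq_integral {f f' : ℝ → ℝ} {a b K m : ℝ} (hab : a ≤ b)
    (hderiv : ∀ᵐ x ∂volume.restrict (Ioc a b), HasDerivAt f (f' x) x)
    (hFTC : ∀ x ∈ Icc a b, f x - f a = ∫ s in a..x, f' s)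
    (hK : ∀ᵐ x ∂volume.restrict (Ioc a b), f' x ≤ K)
    (hm : ∀ x ∈ Icc a b, m ≤ f x) : IntegrableOn f' (Ioc a b) := by
  let N : ℝ → ENNReal := fun t => ∫⁻ x in Ioc a t, ENNReal.ofReal (K - f' x)
  have hK_le : ∀ t ≤ b, ∀ᵐ x ∂volume.restrict (Ioc a t), f' x ≤ K := fun t ht =>
    ae_restrict_of_ae_restrict_of_subset (Ioc_subset_Ioc_right ht) hK
  have hiff : ∀ t ≤ b, IntegrableOn f' (Ioc a t) ↔ N t < ⊤ := fun t ht =>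
    integrable_iff_lintegral_ofReal_sub_lt_top ((measurable_deriv f).aestronglyMeasurable.congr
      (ae_restrict_of_ae_restrict_of_subset (Ioc_subset_Ioc_right ht)
        (hderiv.mono fun x hx => hx.deriv))) (hK_le t ht)
  set C := ENNReal.ofReal (|K| * (b - a) + f a - m)
  have hbound : ∀ t ∈ Icc a b, IntegrableOn f' (Ioc a t) → N t ≤ C := by
    intro t ht hint
    refine (setLIntegral_ofReal_const_sub ht.1 hint (hK_le t ht.2)).trans_le
      (ENNReal.ofReal_le_ofReal ?_)
    nlinarith [le_abs_self K, abs_nonneg K, hm t ht, hFTC t ht, ht.1, ht.2]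
  set S := {t ∈ Icc a b | IntegrableOn f' (Ioc a t)}
  have haS : a ∈ S := ⟨⟨le_rfl, hab⟩, by simp⟩
  have hSbdd : BddAbove S := ⟨b, fun t ht => ht.1.2⟩
  set τ := sSup S
  have hτ : τ ∈ Icc a b := ⟨le_csSup hSbdd haS, csSup_le ⟨a, haS⟩ fun t ht => ht.1.2⟩
  have hτS : τ ∈ S := by
    by_contra hτS
    obtain ⟨u, hmono, -, hlim, huS⟩ :=
      (isLUB_csSup ⟨a, haS⟩ hSbdd).exists_seq_strictMono_tendsto_of_notMem hτS ⟨a, haS⟩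
    refine hτS ⟨hτ, (hiff τ hτ.2).2 ((?_ : N τ ≤ C).trans_lt ENNReal.ofReal_lt_top)⟩
    calc N τ = ∫⁻ x in Ioo a τ, ENNReal.ofReal (K - f' x) := setLIntegral_congr Ioo_ae_eq_Ioc.symm
      _ ≤ ∫⁻ x in ⋃ n, Ioc a (u n), ENNReal.ofReal (K - f' x) :=
          lintegral_mono_set fun x hx => mem_iUnion.2
            (((hlim.eventually (eventually_gt_nhds hx.2)).exists).imp fun n hn => ⟨hx.1, hn.le⟩)
      _ = ⨆ n, N (u n) := setLIntegral_iUnion_of_directed _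
          (Monotone.directed_le fun n k h => Ioc_subset_Ioc_right (hmono.monotone h))
      _ ≤ C := iSup_le fun n => hbound _ (huS n).1 (huS n).2
  have hconst : EqOn f (fun _ => f a) (Ioo τ b) := by
    intro x hx
    have hax : a ≤ x := hτ.1.trans hx.1.le
    have hnot : ¬ IntervalIntegrable f' volume a x := fun h => (not_le.2 hx.1)
      (le_csSup hSbdd ⟨⟨hax, hx.2.le⟩, (intervalIntegrable_iff_integrableOn_Ioc_of_le hax).1 h⟩)
    have := hFTC x ⟨hax, hx.2.le⟩
    rw [integral_undef hnot] at this
    simpa [sub_eq_zero] using this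
  have hzero := ae_restrict_eq_zero_of_hasDerivAt_of_eqOn_const isOpen_Ioo hconst
    (ae_restrict_of_ae_restrict_of_subset (Ioo_subset_Ioc_self.trans (Ioc_subset_Ioc_left hτ.1))
      hderiv)
  rw [← Ioc_union_Ioc_eq_Ioc hτ.1 hτ.2]
  exact hτS.2.union ((integrableOn_Ioc_iff_integrableOn_Ioo enorm_ne_top).2
    (integrableOn_zero.congr_fun_ae hzero.symm))

theorem exists_first_crossing {f g : ℝ → ℝ} {a t₁ : ℝ} (hf : ContinuousOn f (Ici a))
    (hg : ContinuousOn g (Ici a)) (ha : f a < g a) (ht₁ : a ≤ t₁) (h₁ : g t₁ < f t₁) :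
    ∃ t₀, a < t₀ ∧ g t₀ ≤ f t₀ ∧ ∀ u ∈ Ico a t₀, f u ≤ g u := by
  set S := {u | a ≤ u ∧ g u < f u}
  have hSne : S.Nonempty := ⟨t₁, ht₁, h₁⟩
  have hSbdd : BddBelow S := ⟨a, fun u hu => hu.1⟩
  have hclosed : IsClosed (Ici a ∩ (fun u => f u - g u) ⁻¹' Ici 0) :=
    (hf.sub hg).preimage_isClosed_of_isClosed isClosed_Ici isClosed_Ici
  have hcrossed : g (sInf S) ≤ f (sInf S) := sub_nonneg.1
    (hclosed.closure_subset_iff.2 (fun u hu => ⟨hu.1, sub_nonneg.2 hu.2.le⟩)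
      (csInf_mem_closure hSne hSbdd)).2
  refine ⟨sInf S, (le_csInf hSne fun u hu => hu.1).lt_of_ne fun h => ?_, hcrossed,
    fun u hu => not_lt.1 fun h => (csInf_le hSbdd ⟨hu.1, h⟩).not_gt hu.2⟩
  rw [← h] at hcrossed
  linarith

theorem sSup_image_le_exp_mul {V : ℝ → ℝ} {c lam Δ s : ℝ} (hc : 0 ≤ c) (hlam : 0 ≤ lam)
    (hV : ∀ u ∈ Icc (max (s - Δ) 0) s, V u ≤ c * exp (-lam * (u - Δ))) :
    sSup (V '' Icc (max (s - Δ) 0) s) ≤ exp (lam * Δ) * (c * exp (-lam * (s - Δ))) := by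
  refine Real.sSup_le (forall_mem_image.2 fun u hu => (hV u hu).trans ?_) (by positivity)
  calc c * exp (-lam * (u - Δ)) ≤ c * exp (lam * Δ + -lam * (s - Δ)) := by
        gcongr
        nlinarith [(le_max_left _ _).trans hu.1]
    _ = exp (lam * Δ) * (c * exp (-lam * (s - Δ))) := by rw [exp_add]; ring

theorem exists_pos_le_sub_mul_exp {μ q : ℝ} (hqμ : q < μ) (Δ : ℝ) :
    ∃ lam : ℝ, 0 < lam ∧ lam ≤ μ - q * exp (lam * Δ) := by
  have hcont : ContinuousAt (fun l : ℝ => μ - q * exp (l * Δ) - l) 0 := by fun_prop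
  have hpos : ∀ᶠ l in nhdsWithin (0:ℝ) (Ioi 0), 0 < μ - q * exp (l * Δ) - l :=
    nhdsWithin_le_nhds (hcont.eventually (eventually_gt_nhds (by simpa using sub_pos.2 hqμ)))
  obtain ⟨lam, hlam, hlam0⟩ := (hpos.and self_mem_nhdsWithin).exists
  exact ⟨lam, hlam0, by linarith⟩

section Halanay

variable {μ q Δ : ℝ} {V V' : ℝ → ℝ}

theorem halanay_integrableOn (hq : 0 ≤ q) (hμ : 0 ≤ μ)
    (hVnonneg : ∀ t : ℝ, 0 ≤ t → 0 ≤ V t) (hcont : ContinuousOn V (Ici 0))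
    (hderiv : ∀ᵐ t ∂(volume.restrict (Ici (0:ℝ))), HasDerivAt V (V' t) t)
    (hFTC : ∀ t : ℝ, 0 ≤ t → V t - V 0 = ∫ s in (0:ℝ)..t, V' s)
    (hineq : ∀ᵐ t ∂(volume.restrict (Ici (0:ℝ))),
      V' t ≤ -μ * V t + q * sSup (V '' Icc (max (t - Δ) 0) t))
    {b : ℝ} (hb : 0 ≤ b) : IntegrableOn V' (Ioc 0 b) := by
  obtain ⟨C, hC⟩ := (isCompact_Icc.image_of_continuousOn (hcont.mono Icc_subset_Ici_self)).bddAbove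
  have hC0 : 0 ≤ C := (hVnonneg 0 le_rfl).trans (hC (mem_image_of_mem V ⟨le_rfl, hb⟩))
  have hsub : Ioc 0 b ⊆ Ici (0:ℝ) := Ioc_subset_Icc_self.trans Icc_subset_Ici_self
  refine integrableOn_Ioc_of_sub_eq_integral (K := q * C) hb
    (ae_restrict_of_ae_restrict_of_subset hsub hderiv) (fun t ht => hFTC t ht.1) ?_
    (fun t ht => hVnonneg t ht.1)
  filter_upwards [ae_restrict_of_ae_restrict_of_subset hsub hineq,
    ae_restrict_mem measurableSet_Ioc] with t ht htmem
  have hsup : sSup (V '' Icc (max (t - Δ) 0) t) ≤ C := Real.sSup_le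
    (forall_mem_image.2 fun u hu =>
      hC (mem_image_of_mem V ⟨(le_max_right _ _).trans hu.1, hu.2.trans htmem.2⟩)) hC0
  nlinarith [hVnonneg t htmem.1.le, mul_le_mul_of_nonneg_left hsup hq]

theorem halanay_absolutelyContinuousOnInterval (hq : 0 ≤ q) (hμ : 0 ≤ μ)
    (hVnonneg : ∀ t : ℝ, 0 ≤ t → 0 ≤ V t) (hcont : ContinuousOn V (Ici 0))
    (hderiv : ∀ᵐ t ∂(volume.restrict (Ici (0:ℝ))), HasDerivAt V (V' t) t)
    (hFTC : ∀ t : ℝ, 0 ≤ t → V t - V 0 = ∫ s in (0:ℝ)..t, V' s)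
    (hineq : ∀ᵐ t ∂(volume.restrict (Ici (0:ℝ))),
      V' t ≤ -μ * V t + q * sSup (V '' Icc (max (t - Δ) 0) t))
    {b : ℝ} (hb : 0 ≤ b) : AbsolutelyContinuousOnInterval V 0 b := by
  refine absolutelyContinuousOnInterval_of_sub_eq_integral
    ((intervalIntegrable_iff_integrableOn_Ioc_of_le hb).2
      (halanay_integrableOn hq hμ hVnonneg hcont hderiv hFTC hineq hb)) fun x hx => hFTC x ?_
  rw [uIcc_of_le hb] at hx
  exact hx.1

theorem halanay_deriv_le {lam c s v' : ℝ} (hq : 0 ≤ q) (hc : 0 ≤ c) (hlam : 0 ≤ lam)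
    (hlamμ : lam ≤ μ - q * exp (lam * Δ))
    (hV : ∀ u ∈ Icc (max (s - Δ) 0) s, V u ≤ c * exp (-lam * (u - Δ)))
    (hv' : v' ≤ -μ * V s + q * sSup (V '' Icc (max (s - Δ) 0) s)) :
    v' ≤ -μ * V s + (μ - lam) * (c * exp (-lam * (s - Δ))) := by
  have hsup := mul_le_mul_of_nonneg_left (sSup_image_le_exp_mul hc hlam hV) hq
  have hrate : q * exp (lam * Δ) * (c * exp (-lam * (s - Δ))) ≤
      (μ - lam) * (c * exp (-lam * (s - Δ))) :=
    mul_le_mul_of_nonneg_right (by linarith) (by positivity)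
  linarith

theorem halanay_le_of_forall_lt (hq : 0 ≤ q) (hΔ : 0 < Δ) {lam c : ℝ} (hlam : 0 ≤ lam)
    (hlamμ : lam ≤ μ - q * exp (lam * Δ))
    (hVnonneg : ∀ t : ℝ, 0 ≤ t → 0 ≤ V t) (hcont : ContinuousOn V (Ici 0))
    (hderiv : ∀ᵐ t ∂(volume.restrict (Ici (0:ℝ))), HasDerivAt V (V' t) t)
    (hFTC : ∀ t : ℝ, 0 ≤ t → V t - V 0 = ∫ s in (0:ℝ)..t, V' s)
    (hineq : ∀ᵐ t ∂(volume.restrict (Ici (0:ℝ))),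
      V' t ≤ -μ * V t + q * sSup (V '' Icc (max (t - Δ) 0) t))
    (hc : ∀ u ∈ Icc 0 Δ, V u < c) :
    ∀ t, Δ ≤ t → V t ≤ c * exp (-lam * (t - Δ)) := by
  have hμ : 0 ≤ μ := by nlinarith [exp_pos (lam * Δ)]
  have hc0 : 0 < c := (hVnonneg 0 le_rfl).trans_lt (hc 0 ⟨le_rfl, hΔ.le⟩)
  set Φ : ℝ → ℝ := fun s => c * exp (-lam * (s - Δ)) with hΦ
  have hΦ_diff : ContDiff ℝ 1 Φ := by fun_prop
  by_contra! hcross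
  obtain ⟨t₁, ht₁, hVt₁⟩ := hcross
  obtain ⟨t₀, hΔt₀, hcrossed, hbelow⟩ := exists_first_crossing
    (hcont.mono (Ici_subset_Ici.2 hΔ.le)) hΦ_diff.continuous.continuousOn
    (by simpa [hΦ] using hc Δ ⟨hΔ.le, le_rfl⟩) ht₁ hVt₁
  have hbelow₀ : ∀ u ∈ Ico 0 t₀, V u ≤ Φ u := by
    intro u hu
    rcases le_or_gt Δ u with hΔu | huΔ
    · exact hbelow u ⟨hΔu, hu.2⟩
    · calc V u ≤ c := (hc u ⟨hu.1, huΔ.le⟩).le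
        _ ≤ Φ u := le_mul_of_one_le_right hc0.le (one_le_exp (by nlinarith))
  have hVac : AbsolutelyContinuousOnInterval V Δ t₀ :=
    (halanay_absolutelyContinuousOnInterval hq hμ hVnonneg hcont hderiv hFTC hineq
      (hΔ.le.trans hΔt₀.le)).mono
      (uIcc_subset_uIcc (mem_uIcc.2 (.inl ⟨hΔ.le, hΔt₀.le⟩)) right_mem_uIcc)
  have hsub : Ioo Δ t₀ ⊆ Ici 0 := fun s hs => hΔ.le.trans hs.1.le
  have hWderiv : ∀ᵐ s ∂volume.restrict (Ioo Δ t₀),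
      HasDerivAt (Φ - V) (-lam * Φ s - V' s) s := by
    filter_upwards [ae_restrict_of_ae_restrict_of_subset hsub hderiv] with s hs
    exact ((((hasDerivAt_id s).sub_const Δ).const_mul (-lam)).exp.const_mul c).congr_deriv
      (by simp only [hΦ, id]; ring_nf) |>.sub hs
  have hWineq : ∀ᵐ s ∂volume.restrict (Ioo Δ t₀), -μ * (Φ - V) s ≤ -lam * Φ s - V' s := by
    filter_upwards [ae_restrict_of_ae_restrict_of_subset hsub hineq,
      ae_restrict_mem measurableSet_Ioo] with s hs hsmem
    have := halanay_deriv_le hq hc0.le hlam hlamμ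
      (fun u hu => hbelow₀ u ⟨(le_max_right _ _).trans hu.1, hu.2.trans_lt hsmem.2⟩) hs
    simp only [Pi.sub_apply]
    linarith
  have hW := (hΦ_diff.contDiffOn.absolutelyContinuousOnInterval.sub hVac).le_mul_exp_of_ae_deriv
    hΔt₀.le hWderiv hWineq
  have hVΔ := hc Δ ⟨hΔ.le, le_rfl⟩
  simp only [Pi.sub_apply, hΦ, sub_self, mul_zero, exp_zero, mul_one] at hW hcrossed
  nlinarith [exp_pos (μ * (t₀ - Δ))]

end Halanay

/-- Classical Halanay inequality: if `V : [0,∞) → ℝ≥0` is absolutely continuous with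
`V' t ≤ -μ V t + q · sup_{s ∈ [max(t-Δ,0), t]} V s` a.e., `μ > q > 0`, `Δ > 0`, then
there exists `λ > 0` with `λ ≤ μ - q e^{λΔ}` such that
`V t ≤ (sup_{s ∈ [0,Δ]} V s) · e^{-λ(t-Δ)}` for all `t ≥ Δ`. -/
theorem stmt5 (μ q Δ : ℝ) (hq : 0 < q) (hμq : q < μ) (hΔ : 0 < Δ)
    (V V' : ℝ → ℝ)
    (hVnonneg : ∀ t : ℝ, 0 ≤ t → 0 ≤ V t)
    (hcont : ContinuousOn V (Ici 0))
    (hderiv : ∀ᵐ t ∂(volume.restrict (Ici (0:ℝ))), HasDerivAt V (V' t) t)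
    (hFTC : ∀ t : ℝ, 0 ≤ t → V t - V 0 = ∫ s in (0:ℝ)..t, V' s)
    (hineq : ∀ᵐ t ∂(volume.restrict (Ici (0:ℝ))),
      V' t ≤ -μ * V t + q * sSup (V '' Icc (max (t - Δ) 0) t)) :
    ∃ lam : ℝ, 0 < lam ∧ lam ≤ μ - q * exp (lam * Δ) ∧
      ∀ t : ℝ, Δ ≤ t → V t ≤ (sSup (V '' Icc 0 Δ)) * exp (-lam * (t - Δ)) := by
  obtain ⟨lam, hlam0, hlam⟩ := exists_pos_le_sub_mul_exp hμq Δ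
  refine ⟨lam, hlam0, hlam, fun t ht => ?_⟩
  have hbdd : BddAbove (V '' Icc 0 Δ) :=
    (isCompact_Icc.image_of_continuousOn (hcont.mono Icc_subset_Ici_self)).bddAbove
  have hexp := exp_pos (-lam * (t - Δ))
  rw [← div_le_iff₀ hexp]
  refine le_of_forall_gt_imp_ge_of_dense fun c hc => (div_le_iff₀ hexp).2 ?_
  refine halanay_le_of_forall_lt hq.le hΔ hlam0.le hlam hVnonneg hcont hderiv hFTC hineq
    (fun u hu => ?_) t ht
  exact (le_csSup hbdd (mem_image_of_mem V hu)).trans_lt hc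
end

section
/- Let ρ : ℝ≥0 → ℝ≥0 be continuous with ρ(r) < r for r > 0 (and ρ(0)=0), and let (v_k)_{k≥0} be a sequence in ℝ≥0 satisfying v_{k+1} ≤ ρ(max_{k-m ≤ i ≤ k} v_i) for all k ≥ m, where m ≥ 0 is a fixed memory length. Then v_k → 0 as k → ∞. -/
open Set Filter

/-- Discrete Razumikhin/jump convergence: if `ρ : ℝ≥0 → ℝ≥0` is continuous with
`ρ 0 = 0` and `ρ r < r` for `r > 0`, and a nonnegative sequence `v` satisfies
`v (k+1) ≤ ρ (max_{k-m ≤ i ≤ k} v i)` for all `k ≥ m`, then `v k → 0`. -/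
theorem stmt17 (ρ : ℝ → ℝ) (hρcont : ContinuousOn ρ (Ici 0))
    (hρ0 : ρ 0 = 0) (hρnonneg : ∀ r : ℝ, 0 ≤ r → 0 ≤ ρ r)
    (hρ : ∀ r : ℝ, 0 < r → ρ r < r)
    (m : ℕ) (v : ℕ → ℝ) (hv : ∀ k : ℕ, 0 ≤ v k)
    (hrec : ∀ k : ℕ, m ≤ k → v (k + 1) ≤ ρ (sSup (v '' Icc (k - m) k))) :
    Tendsto v atTop (nhds 0) := by
  set W : ℕ → ℝ := fun n => sSup (v '' Icc n (n + m)) with hWdef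
  have hbdd : ∀ n : ℕ, BddAbove (v '' Icc n (n + m)) := fun n =>
    ((Set.finite_Icc _ _).image v).bddAbove
  have hne : ∀ n : ℕ, (v '' Icc n (n + m)).Nonempty := fun n =>
    ⟨v n, ⟨n, ⟨le_refl n, Nat.le_add_right _ _⟩, rfl⟩⟩
  have hle : ∀ n i, i ∈ Icc n (n + m) → v i ≤ W n := fun n i hi =>
    le_csSup (hbdd n) (mem_image_of_mem v hi)
  have hWle : ∀ n B, (∀ i ∈ Icc n (n + m), v i ≤ B) → W n ≤ B := fun n B h =>
    csSup_le (hne n) (by rintro x ⟨i, hi, rfl⟩; exact h i hi)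
  have hvW : ∀ n, v n ≤ W n := fun n => hle n n ⟨le_refl n, Nat.le_add_right _ _⟩
  have hW0 : ∀ n, 0 ≤ W n := fun n => (hv n).trans (hvW n)
  have hρle : ∀ r : ℝ, 0 ≤ r → ρ r ≤ r := by
    intro r hr
    rcases eq_or_lt_of_le hr with h | h
    · simp [← h, hρ0]
    · exact (hρ r h).le
  have hrec' : ∀ k, m ≤ k → v (k + 1) ≤ ρ (W (k - m)) := by
    intro k hk
    have h1 : k - m + m = k := Nat.sub_add_cancel hk
    simp only [hWdef]
    rw [h1]
    exact hrec k hk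
  have hdec : ∀ n, W (n + 1) ≤ W n := by
    intro n
    apply hWle
    intro i hi
    obtain ⟨h1, h2⟩ := hi
    by_cases h : i ≤ n + m
    · exact hle n i ⟨by omega, h⟩
    · have hi' : i = n + m + 1 := by omega
      have := hrec' (n + m) (Nat.le_add_left m n)
      rw [Nat.add_sub_cancel] at this
      rw [hi']
      exact this.trans (hρle _ (hW0 n))
  have hanti : Antitone W := antitone_nat_of_succ_le hdec
  have hbddb : BddBelow (Set.range W) := ⟨0, by rintro x ⟨n, rfl⟩; exact hW0 n⟩
  set L := ⨅ n, W n with hLdef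
  have hWto : Tendsto W atTop (nhds L) := tendsto_atTop_ciInf hanti hbddb
  have hLle : ∀ n, L ≤ W n := fun n => ciInf_le hbddb n
  have hL0 : 0 ≤ L := le_ciInf fun n => hW0 n
  have hLz : L = 0 := by
    by_contra h
    have hLpos : 0 < L := lt_of_le_of_ne hL0 (Ne.symm h)
    -- compactness: uniform gap ε on [L, W 0]
    have hKne : (Icc L (W 0)).Nonempty := ⟨L, le_refl L, hLle 0⟩
    have hsub : Icc L (W 0) ⊆ Ici (0 : ℝ) := fun r hr => hL0.trans hr.1
    have hcont : ContinuousOn (fun r => r - ρ r) (Icc L (W 0)) :=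
      continuousOn_id.sub (hρcont.mono hsub)
    obtain ⟨r₀, hr₀K, hr₀min⟩ := isCompact_Icc.exists_isMinOn hKne hcont
    set ε := r₀ - ρ r₀ with hεdef
    have hεpos : 0 < ε := by
      have : 0 < r₀ := lt_of_lt_of_le hLpos hr₀K.1
      have := hρ r₀ this
      linarith
    have hρε : ∀ r ∈ Icc L (W 0), ρ r ≤ r - ε := by
      intro r hr
      have h5 : r₀ - ρ r₀ ≤ r - ρ r := hr₀min hr
      simp only [hεdef]
      linarith
    have hstep : ∀ n, W (n + (m + 1)) ≤ W n - ε := by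
      intro n
      apply hWle
      intro i hi
      obtain ⟨h1, h2⟩ := hi
      have hk : m ≤ i - 1 := by omega
      have hv' := hrec' (i - 1) hk
      have hi1 : i - 1 + 1 = i := by omega
      rw [hi1] at hv'
      set j := i - 1 - m with hjdef
      have hnj : n ≤ j := by omega
      have hWjK : W j ∈ Icc L (W 0) := ⟨hLle j, hanti (Nat.zero_le j)⟩
      have h3 : v i ≤ W j - ε := hv'.trans (hρε _ hWjK)
      have h4 : W j ≤ W n := hanti hnj
      linarith
    have hiter : ∀ t : ℕ, W ((m + 1) * t) ≤ W 0 - t * ε := by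
      intro t
      induction t with
      | zero => simp
      | succ t ih =>
        have he : (m + 1) * (t + 1) = (m + 1) * t + (m + 1) := by ring
        rw [he]
        have := hstep ((m + 1) * t)
        push_cast
        linarith
    obtain ⟨t, ht⟩ := exists_nat_gt ((W 0 - L) / ε)
    have ht' : W 0 - L < t * ε := by
      rw [div_lt_iff₀ hεpos] at ht
      linarith
    have := hiter t
    have := hLle ((m + 1) * t)
    linarith
  rw [hLz] at hWto
  exact squeeze_zero hv hvW hWto
end

section
/- Let V : [0,∞) → ℝ≥0 be locally absolutely continuous and p : ℝ≥0 → ℝ≥0 continuous with p(r) > r for r > 0. Suppose that for almost every t, if p(V(t)) ≥ sup_{s∈[max(t-Δ,0), t]} V(s) then V'(t) ≤ -α₃(V(t)), where α₃ is continuous positive definite and Δ > 0. Then V(t) ≤ sup_{s∈[0,Δ]} V(s) for all t ≥ 0, and V(t) → 0 as t → ∞. -/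
/-!
Along the trajectory the Razumikhin condition says that `V` decreases at rate `α₃ (V t)` whenever
its recent history lies below `p (V t)`, and the gap `p x - x` is bounded below on compact
subsets of `(0, ∞)`. If `V` rose above `V 0`, then near its maximum `M` on `[0, T]` the whole
history would lie within that gap below `V t`, so `V` would be decreasing there: hence
`V t ≤ V 0` for all `t`. For the decay, if `V ≤ η` from time `T` on, then after one further
delay every value `V r > η - δ` (with `δ` below the gap) satisfies the condition, so
`V' ≤ -b` there; `V` drops below `η - δ` in bounded time and cannot rise above it again.
Finitely many such steps bring the eventual bound down to any `ε > 0`.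
-/

open Set MeasureTheory intervalIntegral Filter

open scoped Topology

theorem intervalIntegrable_of_nonneg_of_integral_le {f : ℝ → ℝ} {s v K : ℝ} (hsv : s ≤ v)
    (hf : ∀ u ∈ Ico s v, IntervalIntegrable f volume s u)
    (hnonneg : ∀ᵐ x, x ∈ Ioc s v → 0 ≤ f x)
    (hbdd : ∀ u ∈ Ico s v, ∫ x in s..u, f x ≤ K) : IntervalIntegrable f volume s v := by
  rcases hsv.eq_or_lt with rfl | hsv
  · exact IntervalIntegrable.refl
  set b : ℕ → ℝ := fun n => v - (v - s) / (n + 1)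
  have hb : ∀ n, b n ∈ Ico s v := fun n => by
    have : (v - s) / (n + 1) ≤ v - s := div_le_self (by linarith) (by simp)
    have : 0 < (v - s) / (n + 1) := by positivity
    constructor <;> simp only [b] <;> linarith
  have hlim : Tendsto b atTop (𝓝 v) := by
    simpa using tendsto_const_nhds.sub
      ((tendsto_const_div_atTop_nhds_zero_nat (v - s)).comp (tendsto_add_atTop_nat 1))
  rw [intervalIntegrable_iff_integrableOn_Ioc_of_le hsv.le]
  refine integrableOn_Ioc_of_intervalIntegral_norm_bounded_right (I := K) (b := b)
    (fun n => (intervalIntegrable_iff_integrableOn_Ioc_of_le (hb n).1).1 (hf _ (hb n))) hlim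
    (Eventually.of_forall fun n => ?_)
  calc ∫ x in Ioc s (b n), ‖f x‖ = ∫ x in s..b n, f x := by
        rw [integral_of_le (hb n).1]
        refine setIntegral_congr_ae measurableSet_Ioc ?_
        filter_upwards [hnonneg] with x hx hxI
        exact Real.norm_of_nonneg (hx ⟨hxI.1, hxI.2.trans (hb n).2.le⟩)
    _ ≤ K := hbdd _ (hb n)

theorem intervalIntegrable_of_ae_eq_zero {f : ℝ → ℝ} {a b : ℝ} (hab : a ≤ b)
    (h : ∀ᵐ r, a < r → f r = 0) : IntervalIntegrable f volume a b := by
  refine (intervalIntegrable_const (c := (0 : ℝ))).congr_ae ?_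
  rw [uIoc_of_le hab]
  filter_upwards [ae_restrict_mem measurableSet_Ioc, ae_restrict_of_ae h] with r hr hr0
  exact (hr0 hr.1).symm

section Primitive

variable {V V' : ℝ → ℝ}

theorem apply_eq_of_not_intervalIntegrable
    (hFTC : ∀ t : ℝ, 0 ≤ t → V t - V 0 = ∫ s in (0:ℝ)..t, V' s) {t : ℝ} (ht : 0 ≤ t)
    (h : ¬IntervalIntegrable V' volume 0 t) : V t = V 0 := by
  linarith [integral_undef h ▸ hFTC t ht]

theorem sub_eq_integral_of_intervalIntegrable
    (hFTC : ∀ t : ℝ, 0 ≤ t → V t - V 0 = ∫ s in (0:ℝ)..t, V' s) {s t : ℝ} (hs : 0 ≤ s)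
    (ht : 0 ≤ t) (hIs : IntervalIntegrable V' volume 0 s)
    (hIt : IntervalIntegrable V' volume 0 t) : V t - V s = ∫ r in s..t, V' r := by
  rw [← integral_interval_sub_left hIt hIs, ← hFTC t ht, ← hFTC s hs]
  ring

theorem deriv_ae_eq_zero_of_not_intervalIntegrable
    (hderiv : ∀ᵐ t ∂(volume.restrict (Ici (0:ℝ))), HasDerivAt V (V' t) t)
    (hFTC : ∀ t : ℝ, 0 ≤ t → V t - V 0 = ∫ s in (0:ℝ)..t, V' s) {v : ℝ} (hv : 0 ≤ v)
    (h : ∀ u, v < u → ¬IntervalIntegrable V' volume 0 u) : ∀ᵐ r, v < r → V' r = 0 := by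
  filter_upwards [(ae_restrict_iff' measurableSet_Ici).1 hderiv] with r hr hvr
  have hconst : V =ᶠ[𝓝 r] fun _ => V 0 := by
    filter_upwards [Ioi_mem_nhds hvr] with u hu
    exact apply_eq_of_not_intervalIntegrable hFTC (hv.trans hu.le) (h u hu)
  exact (hr (hv.trans hvr.le)).unique ((hasDerivAt_const r (V 0)).congr_of_eventuallyEq hconst)

theorem intervalIntegrable_of_deriv_nonpos (hVnonneg : ∀ t : ℝ, 0 ≤ t → 0 ≤ V t)
    (hderiv : ∀ᵐ t ∂(volume.restrict (Ici (0:ℝ))), HasDerivAt V (V' t) t)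
    (hFTC : ∀ t : ℝ, 0 ≤ t → V t - V 0 = ∫ s in (0:ℝ)..t, V' s) {s t : ℝ} (hs : 0 ≤ s)
    (hst : s ≤ t) (hIs : IntervalIntegrable V' volume 0 s) (hneg : ∀ᵐ r, r ∈ Ioc s t → V' r ≤ 0) :
    IntervalIntegrable V' volume 0 t := by
  by_contra hIt
  set G := {u | s ≤ u ∧ IntervalIntegrable V' volume 0 u}
  have hGt : ∀ u ∈ G, u < t := fun u hu => lt_of_not_ge fun htu =>
    hIt (hu.2.mono_set (uIcc_subset_uIcc_left (mem_uIcc_of_le (hs.trans hst) htu)))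
  have hsG : s ∈ G := ⟨le_rfl, hIs⟩
  have hGbdd : BddAbove G := ⟨t, fun u hu => (hGt u hu).le⟩
  set v := sSup G
  have hsv : s ≤ v := le_csSup hGbdd hsG
  have hvt : v ≤ t := csSup_le ⟨s, hsG⟩ fun u hu => (hGt u hu).le
  have hIsu : ∀ u ∈ Ico s v, IntervalIntegrable V' volume s u := fun u hu => by
    obtain ⟨w, hw, huw⟩ := exists_lt_of_lt_csSup ⟨s, hsG⟩ hu.2
    exact hIs.symm.trans
      (hw.2.mono_set (uIcc_subset_uIcc_left (mem_uIcc_of_le (hs.trans hu.1) huw.le)))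
  have hIsv : IntervalIntegrable V' volume s v := by
    refine neg_neg V' ▸ (intervalIntegrable_of_nonneg_of_integral_le (f := -V') (K := V s) hsv
      (fun u hu => (hIsu u hu).neg) ?_ fun u hu => ?_).neg
    · filter_upwards [hneg] with r hr hrI
      exact neg_nonneg.2 (hr ⟨hrI.1, hrI.2.trans hvt⟩)
    · rw [Pi.neg_def, intervalIntegral.integral_neg, ← sub_eq_integral_of_intervalIntegrable hFTC
        hs (hs.trans hu.1) hIs (hIs.trans (hIsu u hu))]
      linarith [hVnonneg u (hs.trans hu.1)]
  have hzero := deriv_ae_eq_zero_of_not_intervalIntegrable hderiv hFTC (hs.trans hsv)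
    fun u hvu hIu => hvu.not_ge (le_csSup hGbdd ⟨hsv.trans hvu.le, hIu⟩)
  exact hIt ((hIs.trans hIsv).trans (intervalIntegrable_of_ae_eq_zero hvt hzero))

/-- The hypothesis `V t - V 0 = ∫ 0..t, V'` is vacuous where `V'` fails to be integrable on
`[0, t]`, since the integral is then `0`; but beyond such a point `V` is constant, so `V' = 0`
a.e. and the one-sided bound `V' ≤ c` still integrates. -/
theorem sub_le_mul_of_deriv_le (hVnonneg : ∀ t : ℝ, 0 ≤ t → 0 ≤ V t)
    (hderiv : ∀ᵐ t ∂(volume.restrict (Ici (0:ℝ))), HasDerivAt V (V' t) t)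
    (hFTC : ∀ t : ℝ, 0 ≤ t → V t - V 0 = ∫ s in (0:ℝ)..t, V' s) {s t c : ℝ} (hs : 0 ≤ s)
    (hst : s ≤ t) (hc : c ≤ 0) (hbound : ∀ᵐ r, r ∈ Ioc s t → V' r ≤ c) :
    V t - V s ≤ c * (t - s) := by
  obtain ⟨hI, hVst⟩ : IntervalIntegrable V' volume s t ∧ V t - V s = ∫ r in s..t, V' r := by
    by_cases hIs : IntervalIntegrable V' volume 0 s
    · have hIt := intervalIntegrable_of_deriv_nonpos hVnonneg hderiv hFTC hs hst hIs
        (hbound.mono fun r hr hrI => (hr hrI).trans hc)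
      exact ⟨hIs.symm.trans hIt,
        sub_eq_integral_of_intervalIntegrable hFTC hs (hs.trans hst) hIs hIt⟩
    · have hnot : ∀ u, s ≤ u → ¬IntervalIntegrable V' volume 0 u := fun u hsu hIu =>
        hIs (hIu.mono_set (uIcc_subset_uIcc_left (mem_uIcc_of_le hs hsu)))
      have hzero := deriv_ae_eq_zero_of_not_intervalIntegrable hderiv hFTC hs
        fun u hsu => hnot u hsu.le
      refine ⟨intervalIntegrable_of_ae_eq_zero hst hzero, ?_⟩
      rw [integral_zero_ae (hzero.mono fun r hr hrI => hr (uIoc_of_le hst ▸ hrI).1),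
        apply_eq_of_not_intervalIntegrable hFTC (hs.trans hst) (hnot t hst),
        apply_eq_of_not_intervalIntegrable hFTC hs (hnot s le_rfl), sub_self]
  calc V t - V s = ∫ r in s..t, V' r := hVst
    _ ≤ ∫ _ in s..t, c := by
      refine integral_mono_ae_restrict hst hI intervalIntegrable_const ?_
      rw [← Measure.restrict_congr_set Ioc_ae_eq_Icc]
      exact (ae_restrict_iff' measurableSet_Ioc).2 hbound
    _ = c * (t - s) := by simp [mul_comm]

end Primitive

structure IsNonnegPrimitive (V V' : ℝ → ℝ) : Prop where
  nonneg : ∀ t : ℝ, 0 ≤ t → 0 ≤ V t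
  continuousOn : ContinuousOn V (Ici 0)
  hasDerivAt : ∀ᵐ t ∂(volume.restrict (Ici (0:ℝ))), HasDerivAt V (V' t) t
  sub_eq_integral : ∀ t : ℝ, 0 ≤ t → V t - V 0 = ∫ s in (0:ℝ)..t, V' s

namespace IsNonnegPrimitive

variable {V V' : ℝ → ℝ}

theorem le_of_deriv_nonpos_of_lt (hV : IsNonnegPrimitive V V') {τ t μ : ℝ} (hτ : 0 ≤ τ)
    (hτt : τ ≤ t) (hμ : V τ ≤ μ) (H : ∀ᵐ r, r ∈ Ioc τ t → μ < V r → V' r ≤ 0) : V t ≤ μ := by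
  set S := Icc τ t ∩ V ⁻¹' Iic μ
  have hSbdd : BddAbove S := bddAbove_Icc.mono inter_subset_left
  have hθ : sSup S ∈ S :=
    ((hV.continuousOn.mono fun x hx => hτ.trans hx.1).preimage_isClosed_of_isClosed
      isClosed_Icc isClosed_Iic).csSup_mem ⟨τ, ⟨le_rfl, hτt⟩, hμ⟩ hSbdd
  have habove : ∀ r ∈ Ioc (sSup S) t, μ < V r := fun r hr => lt_of_not_ge fun hle =>
    hr.1.not_ge (le_csSup hSbdd ⟨⟨hθ.1.1.trans hr.1.le, hr.2⟩, hle⟩)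
  have hdrop := sub_le_mul_of_deriv_le hV.nonneg hV.hasDerivAt hV.sub_eq_integral
    (hτ.trans hθ.1.1) hθ.1.2 le_rfl
    (H.mono fun r hr hrI => hr ⟨hθ.1.1.trans_lt hrI.1, hrI.2⟩ (habove r hrI))
  linarith [show V (sSup S) ≤ μ from hθ.2]

theorem eventually_le_of_deriv_le_neg (hV : IsNonnegPrimitive V V') {τ μ b : ℝ} (hτ : 0 ≤ τ)
    (hb : 0 < b) (H : ∀ᵐ r, τ < r → μ < V r → V' r ≤ -b) : ∀ᶠ t in atTop, V t ≤ μ := by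
  obtain ⟨σ, hτσ, hσ⟩ : ∃ σ, τ ≤ σ ∧ V σ ≤ μ := by
    by_contra! hgt
    have hVτ := hV.nonneg τ hτ
    set t := τ + (V τ + 1) / b
    have hτt : τ ≤ t := le_add_of_nonneg_right (by positivity)
    have hdrop := sub_le_mul_of_deriv_le hV.nonneg hV.hasDerivAt hV.sub_eq_integral hτ hτt
      (neg_nonpos.2 hb.le) (H.mono fun r hr hrI => hr hrI.1 (hgt r hrI.1.le))
    have hfall : -b * (t - τ) = -(V τ + 1) := by simp only [t]; field_simp; ring
    linarith [hV.nonneg t (hτ.trans hτt)]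
  filter_upwards [eventually_ge_atTop σ] with t ht
  exact hV.le_of_deriv_nonpos_of_lt (hτ.trans hτσ) ht hσ
    (H.mono fun r hr hrI hμr => (hr (hτσ.trans_lt hrI.1) hμr).trans (neg_nonpos.2 hb.le))

theorem le_apply_zero_of_razumikhin (hV : IsNonnegPrimitive V V') {Δ : ℝ} {p α₃ : ℝ → ℝ}
    (hpcont : ContinuousOn p (Ici 0)) (hp : ∀ r : ℝ, 0 < r → r < p r)
    (hα₃pos : ∀ s : ℝ, 0 < s → 0 < α₃ s)
    (hR : ∀ᵐ r, 0 ≤ r → (∀ u ∈ Icc (max (r - Δ) 0) r, V u ≤ p (V r)) → V' r ≤ -α₃ (V r))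
    {T : ℝ} (hT : 0 ≤ T) : V T ≤ V 0 := by
  obtain ⟨t', ht', hmax⟩ := isCompact_Icc.exists_isMaxOn (nonempty_Icc.2 hT)
    (hV.continuousOn.mono fun x hx => hx.1)
  rw [isMaxOn_iff] at hmax
  by_contra! hT0
  set M := V t'
  have hM : V 0 < M := hT0.trans_le (hmax T ⟨hT, le_rfl⟩)
  obtain ⟨m, h0m, hmM⟩ := exists_between hM
  have hm : 0 < m := (hV.nonneg 0 le_rfl).trans_lt h0m
  obtain ⟨a, ha, hpa⟩ := isCompact_Icc.exists_forall_le' (s := Icc m M) (f := fun x => p x - x)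
    ((hpcont.mono fun x hx => hm.le.trans hx.1).sub continuousOn_id)
    fun x hx => sub_pos.2 (hp x (hm.trans_le hx.1))
  obtain ⟨μ, hmμ, haμ, hμM⟩ : ∃ μ, m ≤ μ ∧ M - a ≤ μ ∧ μ < M :=
    ⟨max m (M - a), le_max_left _ _, le_max_right _ _, max_lt hmM (by linarith)⟩
  have hMμ : M ≤ μ := by
    refine hV.le_of_deriv_nonpos_of_lt le_rfl ht'.1 (by linarith) ?_
    filter_upwards [hR] with r hr hrI hμr
    have hVr : V r ∈ Icc m M := ⟨hmμ.trans hμr.le, hmax r ⟨hrI.1.le, hrI.2.trans ht'.2⟩⟩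
    have hwin : ∀ u ∈ Icc (max (r - Δ) 0) r, V u ≤ p (V r) := fun u hu =>
      calc V u ≤ M := hmax u ⟨(le_max_right _ _).trans hu.1, hu.2.trans (hrI.2.trans ht'.2)⟩
        _ ≤ V r + a := by linarith
        _ ≤ p (V r) := by linarith [hpa _ hVr]
    linarith [hr hrI.1.le hwin, hα₃pos _ (hm.trans_le hVr.1)]
  linarith

theorem eventually_le_of_razumikhin (hV : IsNonnegPrimitive V V') {Δ : ℝ} (hΔ : 0 ≤ Δ)
    {p α₃ : ℝ → ℝ} (hpcont : ContinuousOn p (Ici 0)) (hp : ∀ r : ℝ, 0 < r → r < p r)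
    (hα₃cont : ContinuousOn α₃ (Ici 0)) (hα₃pos : ∀ s : ℝ, 0 < s → 0 < α₃ s)
    (hR : ∀ᵐ r, 0 ≤ r → (∀ u ∈ Icc (max (r - Δ) 0) r, V u ≤ p (V r)) → V' r ≤ -α₃ (V r))
    {ε : ℝ} (hε : 0 < ε) : ∀ᶠ t in atTop, V t ≤ ε := by
  have hB : ∀ t, 0 ≤ t → V t ≤ V 0 := fun t ht =>
    hV.le_apply_zero_of_razumikhin hpcont hp hα₃pos hR ht
  have hK : ∀ x ∈ Icc (ε / 2) (V 0), 0 < x := fun x hx => (half_pos hε).trans_le hx.1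
  obtain ⟨a, ha, hpa⟩ := isCompact_Icc.exists_forall_le' (s := Icc (ε / 2) (V 0))
    (f := fun x => p x - x) ((hpcont.mono fun x hx => (hK x hx).le).sub continuousOn_id)
    fun x hx => sub_pos.2 (hp x (hK x hx))
  obtain ⟨b, hb, hα₃b⟩ := isCompact_Icc.exists_forall_le' (s := Icc (ε / 2) (V 0))
    (hα₃cont.mono fun x hx => (hK x hx).le) fun x hx => hα₃pos x (hK x hx)
  obtain ⟨δ, hδ, hδa, hδε⟩ : ∃ δ, 0 < δ ∧ δ ≤ a ∧ δ ≤ ε / 2 :=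
    ⟨min a (ε / 2), lt_min ha (half_pos hε), min_le_left _ _, min_le_right _ _⟩
  have step : ∀ η, ε ≤ η → (∀ᶠ t in atTop, V t ≤ η) → ∀ᶠ t in atTop, V t ≤ η - δ := by
    intro η hη hev
    obtain ⟨T, hT⟩ := eventually_atTop.1 (hev.and (eventually_ge_atTop 0))
    have hT0 := (hT T le_rfl).2
    refine hV.eventually_le_of_deriv_le_neg (τ := T + Δ) (by linarith) hb ?_
    filter_upwards [hR] with r hr hTr hμr
    have hr0 : 0 ≤ r := by linarith
    have hVr : V r ∈ Icc (ε / 2) (V 0) := ⟨by linarith, hB r hr0⟩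
    have hwin : ∀ u ∈ Icc (max (r - Δ) 0) r, V u ≤ p (V r) := fun u hu =>
      calc V u ≤ η := (hT u (by linarith [le_max_left (r - Δ) 0, hu.1])).1
        _ ≤ V r + a := by linarith
        _ ≤ p (V r) := by linarith [hpa _ hVr]
    linarith [hr hr0 hwin, hα₃b _ hVr]
  have descent : ∀ n : ℕ, ∀ᶠ t in atTop, V t ≤ max (V 0 - n * δ) ε := by
    intro n
    induction n with
    | zero =>
      filter_upwards [eventually_ge_atTop 0] with t ht
      simpa using Or.inl (hB t ht)
    | succ n ih =>
      rcases le_or_gt (V 0 - n * δ) ε with hle | hlt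
      · filter_upwards [ih] with t ht
        exact (max_eq_right hle ▸ ht).trans (le_max_right _ _)
      · filter_upwards [step _ hlt.le (max_eq_left hlt.le ▸ ih)] with t ht
        push_cast
        linarith [le_max_left (V 0 - (n + 1) * δ) ε]
  obtain ⟨n, hn⟩ := exists_nat_ge (V 0 / δ)
  filter_upwards [descent n] with t ht
  rwa [max_eq_right (by linarith [(div_le_iff₀ hδ).1 hn])] at ht

end IsNonnegPrimitive

theorem stmt18_general (Δ : ℝ) (hΔ : 0 < Δ)
    (p α₃ : ℝ → ℝ)
    (hpcont : ContinuousOn p (Ici 0)) (hp : ∀ r : ℝ, 0 < r → r < p r)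
    (hα₃cont : ContinuousOn α₃ (Ici 0))
    (hα₃pos : ∀ s : ℝ, 0 < s → 0 < α₃ s)
    (V V' : ℝ → ℝ)
    (hVnonneg : ∀ t : ℝ, 0 ≤ t → 0 ≤ V t)
    (hcont : ContinuousOn V (Ici 0))
    (hderiv : ∀ᵐ t ∂(volume.restrict (Ici (0:ℝ))), HasDerivAt V (V' t) t)
    (hFTC : ∀ t : ℝ, 0 ≤ t → V t - V 0 = ∫ s in (0:ℝ)..t, V' s)
    (hRaz : ∀ᵐ t ∂(volume.restrict (Ici (0:ℝ))),
      sSup (V '' Icc (max (t - Δ) 0) t) ≤ p (V t) → V' t ≤ -α₃ (V t)) :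
    (∀ t : ℝ, 0 ≤ t → V t ≤ sSup (V '' Icc 0 Δ)) ∧
    Tendsto V atTop (nhds 0) := by
  have hV : IsNonnegPrimitive V V' := ⟨hVnonneg, hcont, hderiv, hFTC⟩
  have hR : ∀ᵐ r, 0 ≤ r → (∀ u ∈ Icc (max (r - Δ) 0) r, V u ≤ p (V r)) → V' r ≤ -α₃ (V r) := by
    filter_upwards [(ae_restrict_iff' measurableSet_Ici).1 hRaz] with r hr hr0 hwin
    exact hr hr0 (csSup_le ((nonempty_Icc.2 (max_le (by linarith) hr0)).image V)
      (forall_mem_image.2 hwin))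
  have hbdd : BddAbove (V '' Icc 0 Δ) :=
    (isCompact_Icc.image_of_continuousOn (hcont.mono Icc_subset_Ici_self)).bddAbove
  refine ⟨fun t ht => (hV.le_apply_zero_of_razumikhin hpcont hp hα₃pos hR ht).trans
    (le_csSup hbdd ⟨0, ⟨le_rfl, hΔ.le⟩, rfl⟩), tendsto_order.2 ⟨fun a ha => ?_, fun a ha => ?_⟩⟩
  · filter_upwards [eventually_ge_atTop 0] with t ht using ha.trans_le (hVnonneg t ht)
  · filter_upwards [hV.eventually_le_of_razumikhin hΔ.le hpcont hp hα₃cont hα₃pos hR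
      (half_pos ha)] with t ht
    linarith

/-- Continuous-time Razumikhin theorem: let `V : [0,∞) → ℝ≥0` be locally absolutely
continuous, `p` continuous with `p r > r` for `r > 0`, `α₃` continuous positive definite,
`Δ > 0`. If for a.e. `t ≥ 0`, `p (V t) ≥ sup_{s ∈ [max(t-Δ,0), t]} V s` implies
`V' t ≤ -α₃ (V t)`, then `V t ≤ sup_{s ∈ [0,Δ]} V s` for all `t ≥ 0` and `V t → 0`. -/
theorem stmt18 (Δ : ℝ) (hΔ : 0 < Δ)
    (p α₃ : ℝ → ℝ)
    (hpcont : ContinuousOn p (Ici 0)) (hp : ∀ r : ℝ, 0 < r → r < p r)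
    (hα₃cont : ContinuousOn α₃ (Ici 0)) (hα₃0 : α₃ 0 = 0)
    (hα₃pos : ∀ s : ℝ, 0 < s → 0 < α₃ s)
    (V V' : ℝ → ℝ)
    (hVnonneg : ∀ t : ℝ, 0 ≤ t → 0 ≤ V t)
    (hcont : ContinuousOn V (Ici 0))
    (hderiv : ∀ᵐ t ∂(volume.restrict (Ici (0:ℝ))), HasDerivAt V (V' t) t)
    (hFTC : ∀ t : ℝ, 0 ≤ t → V t - V 0 = ∫ s in (0:ℝ)..t, V' s)
    (hRaz : ∀ᵐ t ∂(volume.restrict (Ici (0:ℝ))),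
      sSup (V '' Icc (max (t - Δ) 0) t) ≤ p (V t) → V' t ≤ -α₃ (V t)) :
    (∀ t : ℝ, 0 ≤ t → V t ≤ sSup (V '' Icc 0 Δ)) ∧
    Tendsto V atTop (nhds 0) :=
  stmt18_general Δ hΔ p α₃ hpcont hp hα₃cont hα₃pos V V' hVnonneg hcont hderiv hFTC hRaz
end
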